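/- For every integer m ≥ 1 and all t ≥ 1, h(t) Q_{m-1}(t) ≤ 2 Q_m(t), where h(t) = ∫₁^∞ s^{-γ}(max(t,s))^{-1} ds and Q_m(t) = ∫₁^∞ s^{-γ}(max(t,s))^{-1} h(s)^m ds. -/

import Mathlib

/-!
With `K(t,s) = s^{-γ} / max(t,s)` we have `h(t) = ∫ K(t,s) ds` and `Q_m(t) = ∫ K(t,s) h(s)^m ds`,
so `h(t) Q_{m-1}(t)` and `Q_m(t)` are the double integrals over `(s,u)` of
`F = K(t,s) K(t,u) h(s)^{m-1}` and `G = K(t,s) K(s,u) h(s)^{m-1}`. Pointwise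
`F(s,u) ≤ G(s,u) + G(u,s)`: if `max(s,u) ≤ max(t,u)` the first summand already dominates, and
otherwise `s > t, u`, so `max(t,s) = max(u,s) = s` and `h(s) ≤ h(u)` since `h` is nonincreasing,
which makes the second summand dominate. The swap `(s,u) ↦ (u,s)` preserves the integral.
-/

open MeasureTheory Real

noncomputable def h0 (γ t : ℝ) : ℝ := ∫ s in (1:ℝ)..t, s ^ (-γ)

noncomputable def hfun (γ t : ℝ) : ℝ := ∫ s in Set.Ioi (1:ℝ), s ^ (-γ) * (max t s)⁻¹

noncomputable def Nfun (γ : ℝ) (m : ℕ) (t : ℝ) : ℝ := ∫ s in (1:ℝ)..t, s ^ (-γ) * (hfun γ s) ^ m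

noncomputable def Qfun (γ : ℝ) (m : ℕ) (t : ℝ) : ℝ :=
  ∫ s in Set.Ioi (1:ℝ), s ^ (-γ) * (max t s)⁻¹ * (hfun γ s) ^ m

noncomputable def Pfun (γ : ℝ) (m : ℕ) (t : ℝ) : ℝ :=
  ∫ s in Set.Ioi (1:ℝ), s ^ (-γ) * hfun γ (max t s) * (hfun γ s) ^ m

noncomputable def Rfun (γ : ℝ) (m : ℕ) (t : ℝ) : ℝ :=
  ∫ s in Set.Ioi t, s ^ (-2 : ℝ) * Pfun γ m s

open Set

noncomputable def kernel (γ t s : ℝ) : ℝ := s ^ (-γ) * (max t s)⁻¹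

section Kernel

variable {γ : ℝ}

lemma rpow_mul_inv_le_rpow_sub_one {a b s : ℝ} (hs : 0 < s) (hsb : s ≤ b) :
    s ^ a * b⁻¹ ≤ s ^ (a - 1) := by
  rw [rpow_sub_one hs.ne', div_eq_mul_inv]
  gcongr

lemma kernel_nonneg (t : ℝ) {s : ℝ} (hs : 0 < s) : 0 ≤ kernel γ t s := by
  have : 0 < max t s := hs.trans_le (le_max_right t s)
  unfold kernel
  positivity

lemma kernel_le (t : ℝ) {s : ℝ} (hs : 0 < s) : kernel γ t s ≤ s ^ (-γ - 1) :=
  rpow_mul_inv_le_rpow_sub_one hs (le_max_right t s)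

lemma integrableOn_rpow_neg_sub_one (hγ : 0 < γ) :
    IntegrableOn (fun s : ℝ ↦ s ^ (-γ - 1)) (Ioi 1) :=
  integrableOn_Ioi_rpow_of_lt (by linarith) one_pos

lemma integrableOn_kernel (hγ : 0 < γ) (t : ℝ) : IntegrableOn (kernel γ t) (Ioi 1) := by
  refine (integrableOn_rpow_neg_sub_one hγ).mono' (by unfold kernel; fun_prop) ?_
  filter_upwards [ae_restrict_mem measurableSet_Ioi] with s hs
  have hs₀ : (0 : ℝ) < s := one_pos.trans hs
  rw [norm_of_nonneg (kernel_nonneg t hs₀)]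
  exact kernel_le t hs₀

lemma hfun_nonneg (t : ℝ) : 0 ≤ hfun γ t :=
  setIntegral_nonneg measurableSet_Ioi fun _ hs ↦ kernel_nonneg t (one_pos.trans hs)

lemma hfun_antitone (hγ : 0 < γ) : Antitone (hfun γ) := by
  intro t₁ t₂ h
  refine setIntegral_mono_on (integrableOn_kernel hγ t₂) (integrableOn_kernel hγ t₁)
    measurableSet_Ioi fun s hs ↦ ?_
  have hs₀ : (0 : ℝ) < s := one_pos.trans hs
  have : 0 < max t₁ s := hs₀.trans_le (le_max_right _ _)
  gcongr

end Kernel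

lemma inv_max_mul_inv_max_le {t s u x y : ℝ} (hs : 0 < s) (hu : 0 < u) (hx : 0 ≤ x) (hy : 0 ≤ y)
    (hxy : u ≤ s → x ≤ y) :
    (max t s)⁻¹ * (max t u)⁻¹ * x ≤
      (max t s)⁻¹ * (max s u)⁻¹ * x + (max t u)⁻¹ * (max u s)⁻¹ * y := by
  have : 0 < max t s := hs.trans_le (le_max_right t s)
  have : 0 < max t u := hu.trans_le (le_max_right t u)
  have : 0 < max s u := hu.trans_le (le_max_right s u)
  rcases le_or_gt (max s u) (max t u) with h | h
  · calc (max t s)⁻¹ * (max t u)⁻¹ * x ≤ (max t s)⁻¹ * (max s u)⁻¹ * x := by gcongr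
      _ ≤ _ := le_add_of_nonneg_right (by positivity)
  · obtain ⟨hts, hus⟩ : t < s ∧ u < s := by
      simpa [max_lt_iff, (le_max_right t u).not_gt] using h
    calc (max t s)⁻¹ * (max t u)⁻¹ * x ≤ (max t u)⁻¹ * (max u s)⁻¹ * y := by
          rw [max_eq_right hts.le, max_eq_right hus.le, mul_comm s⁻¹]
          gcongr
          exact hxy hus.le
      _ ≤ _ := le_add_of_nonneg_left (by positivity)

lemma ae_restrict_prod_restrict_mem {α β : Type*} [MeasurableSpace α] [MeasurableSpace β]
    {μ : Measure α} {ν : Measure β} [SFinite μ] [SFinite ν] {s : Set α} {t : Set β}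
    (hs : MeasurableSet s) (ht : MeasurableSet t) :
    ∀ᵐ z ∂(μ.restrict s).prod (ν.restrict t), z ∈ s ×ˢ t := by
  rw [Measure.prod_restrict]
  exact ae_restrict_mem (hs.prod ht)

lemma integral_le_two_mul_integral_of_le_add_swap {α : Type*} [MeasurableSpace α]
    {μ : Measure α} [SFinite μ] {F G : α × α → ℝ} (hF : Integrable F (μ.prod μ))
    (hG : Integrable G (μ.prod μ)) (hFG : ∀ᵐ z ∂μ.prod μ, F z ≤ G z + G z.swap) :
    ∫ z, F z ∂μ.prod μ ≤ 2 * ∫ z, G z ∂μ.prod μ :=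
  calc ∫ z, F z ∂μ.prod μ ≤ ∫ z, G z + G z.swap ∂μ.prod μ :=
        integral_mono_ae hF (hG.add hG.swap) hFG
    _ = 2 * ∫ z, G z ∂μ.prod μ := by
        rw [integral_add hG (hG.swap : Integrable (fun z ↦ G z.swap) _), integral_prod_swap G,
          two_mul]

section KernelProduct

variable {γ : ℝ}

lemma kernel_mul_kernel_le (hγ : 0 < γ) (t : ℝ) {s u : ℝ} (hs : 0 < s) (hu : 0 < u) (k : ℕ) :
    kernel γ t s * hfun γ s ^ k * kernel γ t u ≤
      kernel γ t s * hfun γ s ^ k * kernel γ s u + kernel γ t u * hfun γ u ^ k * kernel γ u s := by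
  have key := inv_max_mul_inv_max_le (t := t) hs hu (pow_nonneg (hfun_nonneg s) k)
    (pow_nonneg (hfun_nonneg u) k) fun h ↦ pow_le_pow_left₀ (hfun_nonneg s) (hfun_antitone hγ h) k
  unfold kernel
  calc _ = s ^ (-γ) * u ^ (-γ) * ((max t s)⁻¹ * (max t u)⁻¹ * hfun γ s ^ k) := by ring
    _ ≤ s ^ (-γ) * u ^ (-γ) * ((max t s)⁻¹ * (max s u)⁻¹ * hfun γ s ^ k +
        (max t u)⁻¹ * (max u s)⁻¹ * hfun γ u ^ k) := by gcongr
    _ = _ := by ring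

lemma integrable_kernel_mul_kernel (hγ : 0 < γ) (t : ℝ) (k : ℕ) {b : ℝ × ℝ → ℝ}
    (hb : Measurable b) :
    Integrable (fun z : ℝ × ℝ ↦ kernel γ t z.1 * hfun γ z.1 ^ k * kernel γ (b z) z.2)
      ((volume.restrict (Ioi 1)).prod (volume.restrict (Ioi 1))) := by
  have hmeas : Measurable (hfun γ) := (hfun_antitone hγ).measurable
  refine (((integrableOn_rpow_neg_sub_one hγ).mul_const (hfun γ 1 ^ k)).mul_prod
    (integrableOn_rpow_neg_sub_one hγ)).mono' (by unfold kernel; fun_prop) ?_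
  filter_upwards [ae_restrict_prod_restrict_mem measurableSet_Ioi measurableSet_Ioi]
    with z ⟨hs, hu⟩
  have hs₀ : (0 : ℝ) < z.1 := one_pos.trans hs
  have hu₀ : (0 : ℝ) < z.2 := one_pos.trans hu
  have hK₁ := kernel_nonneg (γ := γ) t hs₀
  have hK₂ := kernel_nonneg (γ := γ) (b z) hu₀
  have hh := hfun_nonneg (γ := γ) z.1
  rw [norm_of_nonneg (by positivity)]
  gcongr
  · exact mul_nonneg (by positivity) (pow_nonneg (hfun_nonneg 1) k)
  · exact kernel_le t hs₀
  · exact hfun_antitone hγ hs.le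
  · exact kernel_le (b z) hu₀

theorem hfun_mul_Qfun_le_two_mul_Qfun_succ (hγ : 0 < γ) (t : ℝ) (k : ℕ) :
    hfun γ t * Qfun γ k t ≤ 2 * Qfun γ (k + 1) t := by
  set μ := volume.restrict (Ioi (1 : ℝ))
  have hprod : hfun γ t * Qfun γ k t =
      ∫ z, kernel γ t z.1 * hfun γ z.1 ^ k * kernel γ t z.2 ∂μ.prod μ :=
    ((integral_prod_mul (fun s ↦ kernel γ t s * hfun γ s ^ k) (kernel γ t)).trans
      (mul_comm _ _)).symm
  have hiter : Qfun γ (k + 1) t =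
      ∫ z, kernel γ t z.1 * hfun γ z.1 ^ k * kernel γ z.1 z.2 ∂μ.prod μ := by
    rw [integral_prod _ (integrable_kernel_mul_kernel hγ t k measurable_fst)]
    simp only [integral_const_mul, mul_assoc]
    rfl
  rw [hprod, hiter]
  refine integral_le_two_mul_integral_of_le_add_swap
    (integrable_kernel_mul_kernel hγ t k measurable_const)
    (integrable_kernel_mul_kernel hγ t k measurable_fst) ?_
  filter_upwards [ae_restrict_prod_restrict_mem measurableSet_Ioi measurableSet_Ioi]
    with z ⟨hs, hu⟩
  exact kernel_mul_kernel_le hγ t (one_pos.trans hs) (one_pos.trans hu) k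

end KernelProduct

theorem stmt_13_general (γ t : ℝ) (hγ : 0 < γ) (m : ℕ) (hm : 1 ≤ m) :
    hfun γ t * Qfun γ (m - 1) t ≤ 2 * Qfun γ m t := by
  obtain ⟨k, rfl⟩ : ∃ k, m = k + 1 := ⟨m - 1, by omega⟩
  exact hfun_mul_Qfun_le_two_mul_Qfun_succ hγ t k

theorem stmt_13 (γ t : ℝ) (hγ : 0 < γ) (hγ1 : γ ≤ 1) (ht : 1 ≤ t) (m : ℕ) (hm : 1 ≤ m) :
    hfun γ t * Qfun γ (m - 1) t ≤ 2 * Qfun γ m t :=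
  stmt_13_general γ t hγ m hm
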